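/- Let N ≥ 4 be an integer and set r_N* = (1 − 2 ln(2(N+1))/(N+1))^{1/2}. Then: (i) (1/(2π)) ∫₀^{2π} K_N(ψ, r) dψ = 1 for every r ∈ [0,1); and (ii) for every 2π-periodic bounded measurable g: ℝ → ℝ with a ≤ g(θ′) ≤ b for all θ′, every θ ∈ ℝ and every r with 0 ≤ r ≤ r_N*, one has a ≤ (1/(2π)) ∫₀^{2π} K_N(θ−θ′, r) g(θ′) dθ′ ≤ b. -/

import Mathlib

open Real MeasureTheory Set

/-- The truncated Poisson kernel. -/
noncomputable def KN (N : ℕ) (ψ r : ℝ) : ℝ :=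
  1 + 2 * ∑ n ∈ Finset.Icc 1 N, r^n * Real.cos (n*ψ)

lemma kn_re (N : ℕ) (ψ r : ℝ) :
    KN N ψ r = (1 + 2 * ∑ n ∈ Finset.Icc 1 N, ((r:ℂ) * Complex.exp (ψ * Complex.I))^n).re := by
  have h : ∀ n : ℕ, (((r:ℂ) * Complex.exp (ψ * Complex.I))^n).re = r^n * Real.cos (n*ψ) := by
    intro n
    rw [mul_pow, ← Complex.exp_nat_mul]
    have h2 : (n:ℂ) * (ψ * Complex.I) = ((n*ψ:ℝ):ℂ) * Complex.I := by push_cast; ring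
    rw [h2, show ((r:ℂ))^n = ((r^n : ℝ):ℂ) by push_cast; ring, Complex.re_ofReal_mul,
      Complex.exp_ofReal_mul_I_re]
  simp [KN, Complex.add_re, Complex.mul_re, Complex.re_sum, h]

lemma kn_nonneg (N : ℕ) (ψ r : ℝ) (hr0 : 0 ≤ r) (hr1 : r < 1)
    (h : 4*r^(N+1) ≤ 1 - r^2) : 0 ≤ KN N ψ r := by
  set z : ℂ := (r:ℂ) * Complex.exp (ψ * Complex.I) with hz
  have hzabs : ‖z‖ = r := by
    rw [hz, norm_mul, Complex.norm_exp_ofReal_mul_I, Complex.norm_real, Real.norm_eq_abs, abs_of_nonneg hr0, mul_one]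
  have hu : (1 : ℂ) - z ≠ 0 := by
    intro hc
    have hze : z = 1 := by linear_combination -hc
    rw [hze] at hzabs; simp at hzabs; linarith
  have hQ : 0 < Complex.normSq (1 - z) := by rwa [Complex.normSq_pos]
  have hApos : 0 < ‖1 - z‖ := by
    exact norm_pos_iff.mpr hu
  have hA2 : ‖1 - z‖ ≤ 2 := by
    calc ‖1 - z‖ ≤ ‖(1:ℂ)‖ + ‖z‖ := norm_sub_le 1 z
      _ ≤ 2 := by rw [hzabs]; simp; linarith
  -- geometric sum identity
  have hsum : ((1:ℂ) - z) * (1 + 2 * ∑ n ∈ Finset.Icc 1 N, z^n) = 1 + z - 2*z^(N+1) := by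
    have h1 : ∑ n ∈ Finset.Icc 1 N, z^n = (∑ i ∈ Finset.range (N+1), z^i) - 1 := by
      have : Finset.range (N+1) = Finset.Ico 0 (N+1) := by rw [Finset.range_eq_Ico]
      rw [this, ← Finset.sum_Ico_consecutive _ (Nat.zero_le 1) (Nat.le_add_left 1 N),
        ← Finset.Ico_add_one_right_eq_Icc]
      simp
    have h2 := geom_sum_mul z (N+1)
    rw [h1]; linear_combination (-2 : ℂ) * h2
  have hdiv : ((1:ℂ) + 2 * ∑ n ∈ Finset.Icc 1 N, z^n) = (1 + z - 2*z^(N+1))/(1-z) := by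
    rw [eq_div_iff hu]; linear_combination hsum
  have hsplit : ((1:ℂ) + z - 2*z^(N+1))/(1-z) = 2*(1-z)⁻¹ - 1 - 2*(z^(N+1)*(1-z)⁻¹) := by
    field_simp; ring
  have hKN : KN N ψ r = 2*((1-z).re/Complex.normSq (1-z)) - 1 - 2*(z^(N+1)*(1-z)⁻¹).re := by
    rw [kn_re, ← hz, hdiv, hsplit]
    simp [Complex.sub_re, Complex.mul_re, Complex.inv_re]
  -- Part A
  have hnsz : Complex.normSq z = r^2 := by rw [Complex.normSq_eq_norm_sq, hzabs]
  have hnszsub : Complex.normSq (1-z) = 1 - 2*z.re + r^2 := by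
    rw [← hnsz]; simp [Complex.normSq_apply, Complex.sub_re, Complex.sub_im]; ring
  have hArea : 2*((1-z).re/Complex.normSq (1-z)) - 1 = (1 - r^2)/Complex.normSq (1-z) := by
    field_simp
    rw [hnszsub]
    rw [Complex.sub_re, Complex.one_re]; ring
  -- Part B
  have hB : |(z^(N+1)*(1-z)⁻¹).re| ≤ 2*r^(N+1)/Complex.normSq (1-z) := by
    calc |(z^(N+1)*(1-z)⁻¹).re| ≤ ‖z^(N+1)*(1-z)⁻¹‖ := Complex.abs_re_le_norm _
      _ = r^(N+1) * (‖1-z‖)⁻¹ := by rw [norm_mul, norm_pow, norm_inv, hzabs]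
      _ = r^(N+1) * ‖1-z‖ / (‖1-z‖)^2 := by field_simp
      _ ≤ 2*r^(N+1)/Complex.normSq (1-z) := by
          rw [Complex.normSq_eq_norm_sq, div_le_div_iff₀ (by positivity) (by positivity)]
          nlinarith [mul_nonneg (mul_nonneg (pow_nonneg hr0 (N+1))
            (sq_nonneg (‖1-z‖))) (sub_nonneg.mpr hA2)]
  have heq : (1-r^2)/Complex.normSq (1-z) - 2*(2*r^(N+1)/Complex.normSq (1-z))
      = (1 - r^2 - 4*r^(N+1))/Complex.normSq (1-z) := by ring
  have hpos : 0 ≤ (1 - r^2 - 4*r^(N+1))/Complex.normSq (1-z) := div_nonneg (by linarith) hQ.le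
  rw [hKN, hArea]
  linarith [heq, hpos, (abs_le.mp hB).2]


lemma radius_cond (N : ℕ) (hN : 4 ≤ N) (r : ℝ) (hr0 : 0 ≤ r)
    (hr : r ≤ Real.sqrt (1 - 2*Real.log (2*(N+1))/(N+1))) :
    4*r^(N+1) ≤ 1 - r^2 ∧ r < 1 := by
  set L := Real.log (2*((N:ℝ)+1)) with hLdef
  have hN4 : (4:ℝ) ≤ N := by exact_mod_cast hN
  have hNpos : (0:ℝ) < (N:ℝ)+1 := by linarith
  have hL1 : 1 ≤ L := by
    rw [hLdef, Real.le_log_iff_exp_le (by linarith)]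
    have := Real.exp_one_lt_d9
    linarith
  have hexp2 : Real.exp (-(2*L/((N:ℝ)+1))) = (Real.exp (-(L/((N:ℝ)+1))))^2 := by
    rw [← Real.exp_nat_mul]
    congr 1
    push_cast
    ring
  have hre : r ≤ Real.exp (-(L/((N:ℝ)+1))) := by
    calc r ≤ Real.sqrt (1 - 2*L/((N:ℝ)+1)) := hr
      _ ≤ Real.sqrt (Real.exp (-(2*L/((N:ℝ)+1)))) := by
          apply Real.sqrt_le_sqrt
          have := Real.add_one_le_exp (-(2*L/((N:ℝ)+1)))
          linarith
      _ = Real.exp (-(L/((N:ℝ)+1))) := by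
          rw [hexp2, Real.sqrt_sq (Real.exp_nonneg _)]
  have hexplt1 : Real.exp (-(L/((N:ℝ)+1))) < 1 := by
    rw [Real.exp_lt_one_iff]
    have : 0 < L/((N:ℝ)+1) := by positivity
    linarith
  have hr1 : r < 1 := lt_of_le_of_lt hre hexplt1
  have hpow : r^(N+1) ≤ 1/(2*((N:ℝ)+1)) := by
    calc r^(N+1) ≤ (Real.exp (-(L/((N:ℝ)+1))))^(N+1) := pow_le_pow_left₀ hr0 hre _
      _ = Real.exp (-L) := by
          rw [← Real.exp_nat_mul]
          congr 1
          push_cast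
          field_simp
      _ = 1/(2*((N:ℝ)+1)) := by
          rw [Real.exp_neg, hLdef, Real.exp_log (by linarith)]
          ring
  refine ⟨?_, hr1⟩
  by_cases hx : 0 ≤ 1 - 2*L/((N:ℝ)+1)
  · have hr2 : r^2 ≤ 1 - 2*L/((N:ℝ)+1) := (Real.le_sqrt hr0 hx).mp hr
    have h1 : 4*r^(N+1) ≤ 2/((N:ℝ)+1) := by
      have : (2:ℝ)/((N:ℝ)+1) = 4*(1/(2*((N:ℝ)+1))) := by
        field_simp
        ring
      rw [this]
      linarith
    have h2 : 2/((N:ℝ)+1) ≤ 2*L/((N:ℝ)+1) := by gcongr <;> linarith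
    linarith
  · have hs0 : Real.sqrt (1 - 2*L/((N:ℝ)+1)) = 0 :=
      Real.sqrt_eq_zero_of_nonpos (by linarith)
    have : r = 0 := le_antisymm (by rw [← hs0]; exact hr) hr0
    subst this
    norm_num

lemma intcos (b : ℝ) (n : ℕ) (hn : 1 ≤ n) :
    ∫ x in (0:ℝ)..(2*π), Real.cos (n*(b - x)) = 0 := by
  have hn0 : (n:ℝ) ≠ 0 := Nat.cast_ne_zero.mpr (by omega)
  have hd : ∀ x ∈ Set.uIcc (0:ℝ) (2*π),
      HasDerivAt (fun x => -Real.sin ((n:ℝ)*b - n*x)/n) (Real.cos ((n:ℝ)*(b-x))) x := by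
    intro x _
    have h1 : HasDerivAt (fun x : ℝ => (n:ℝ)*b - n*x) (-(n:ℝ)) x := by
      simpa using (((hasDerivAt_id' x).const_mul (n:ℝ)).const_sub ((n:ℝ)*b))
    have h2 := (Real.hasDerivAt_sin ((n:ℝ)*b - n*x)).comp x h1
    have h3 := (h2.neg).div_const (n:ℝ)
    have harg : (n:ℝ)*(b-x) = (n:ℝ)*b - n*x := by ring
    rw [harg]
    exact h3.congr_deriv (by field_simp)
  have hci : IntervalIntegrable (fun x => Real.cos ((n:ℝ)*(b - x))) volume 0 (2*π) :=
    (Continuous.intervalIntegrable (by continuity) 0 (2*π))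
  rw [intervalIntegral.integral_eq_sub_of_hasDerivAt hd hci]
  have h2pi : (n:ℝ)*b - n*(2*π) = (n:ℝ)*b - n*(2*π) := rfl
  rw [show (n:ℝ)*b - n*(2*π) = (n:ℝ)*b - n*(2*π) from rfl]
  rw [Real.sin_sub_nat_mul_two_pi ((n:ℝ)*b) n]
  simp

lemma kn_mass (N : ℕ) (θ r : ℝ) :
    ∫ θ' in (0:ℝ)..(2*π), KN N (θ - θ') r = 2*π := by
  have hc : ∀ n : ℕ, Continuous (fun θ' : ℝ => r^n * Real.cos ((n:ℝ)*(θ-θ'))) := by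
    intro n; continuity
  have hs : Continuous (fun θ' : ℝ => 2*∑ n ∈ Finset.Icc 1 N, r^n * Real.cos ((n:ℝ)*(θ-θ'))) := by
    apply Continuous.mul continuous_const
    exact continuous_finset_sum _ (fun n _ => hc n)
  have : (fun θ' => KN N (θ - θ') r)
      = fun θ' => 1 + 2*∑ n ∈ Finset.Icc 1 N, r^n * Real.cos ((n:ℝ)*(θ-θ')) := rfl
  rw [this, intervalIntegral.integral_add (intervalIntegrable_const) (hs.intervalIntegrable 0 (2*π)),
    intervalIntegral.integral_const_mul,
    intervalIntegral.integral_finset_sum (fun n _ => (hc n).intervalIntegrable 0 (2*π)),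
    intervalIntegral.integral_const]
  have hz : ∀ n ∈ Finset.Icc 1 N, (∫ θ' in (0:ℝ)..(2*π), r^n * Real.cos ((n:ℝ)*(θ-θ'))) = 0 := by
    intro n hmem
    rw [intervalIntegral.integral_const_mul, intcos θ n (Finset.mem_Icc.mp hmem).1, mul_zero]
  rw [Finset.sum_congr rfl hz]
  simp


theorem stmt10 (N : ℕ) (hN : 4 ≤ N) :
    (∀ r ∈ Set.Ico (0:ℝ) 1, (1/(2*π)) * ∫ ψ in (0:ℝ)..(2*π), KN N ψ r = 1) ∧
    (∀ g : ℝ → ℝ, (∀ t, g (t + 2*π) = g t) → Measurable g →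
      ∀ a b : ℝ, (∀ t, a ≤ g t ∧ g t ≤ b) →
      ∀ θ r : ℝ, 0 ≤ r → r ≤ Real.sqrt (1 - 2*Real.log (2*(N+1))/(N+1)) →
        a ≤ (1/(2*π)) * ∫ θ' in (0:ℝ)..(2*π), KN N (θ - θ') r * g θ' ∧
        (1/(2*π)) * ∫ θ' in (0:ℝ)..(2*π), KN N (θ - θ') r * g θ' ≤ b) := by
  have h2pi : (0:ℝ) < 2*π := by positivity
  constructor
  · intro r _
    have heq : ∀ ψ : ℝ, KN N ψ r = KN N (0 - ψ) r := by
      intro ψ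
      simp only [KN, zero_sub, mul_neg, Real.cos_neg]
    have hm : ∫ ψ in (0:ℝ)..(2*π), KN N ψ r = 2*π := by
      rw [intervalIntegral.integral_congr (fun ψ _ => heq ψ)]
      exact kn_mass N 0 r
    rw [hm]
    field_simp
  · intro g _ hmeas a b hab θ r hr0 hrle
    obtain ⟨hkey, hr1⟩ := radius_cond N hN r hr0 hrle
    have hknn : ∀ θ', 0 ≤ KN N (θ - θ') r := fun θ' => kn_nonneg N _ r hr0 hr1 hkey
    have hab' : a ≤ b := le_trans (hab 0).1 (hab 0).2
    -- continuity of the kernel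
    have hc : ∀ n : ℕ, Continuous (fun θ' : ℝ => r^n * Real.cos ((n:ℝ)*(θ-θ'))) := by
      intro n; continuity
    have hs : Continuous (fun θ' : ℝ => 2*∑ n ∈ Finset.Icc 1 N, r^n * Real.cos ((n:ℝ)*(θ-θ'))) :=
      Continuous.mul continuous_const (continuous_finset_sum _ (fun n _ => hc n))
    have hKcont : Continuous (fun θ' => KN N (θ - θ') r) := by
      have : (fun θ' => KN N (θ - θ') r)
          = fun θ' => 1 + 2*∑ n ∈ Finset.Icc 1 N, r^n * Real.cos ((n:ℝ)*(θ-θ')) := rfl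
      rw [this]
      exact continuous_const.add hs
    -- bounds
    have hKb : ∀ ψ : ℝ, |KN N ψ r| ≤ 1 + 2*N := by
      intro ψ
      have hterm : ∀ n ∈ Finset.Icc 1 N, |r^n * Real.cos ((n:ℝ)*ψ)| ≤ 1 := by
        intro n _
        rw [abs_mul]
        have h1 : |r^n| ≤ 1 := by
          rw [abs_pow, abs_of_nonneg hr0]
          exact pow_le_one₀ hr0 hr1.le
        have h2 : |Real.cos ((n:ℝ)*ψ)| ≤ 1 := Real.abs_cos_le_one _
        nlinarith [abs_nonneg (r^n), abs_nonneg (Real.cos ((n:ℝ)*ψ))]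
      have habs : |∑ n ∈ Finset.Icc 1 N, r^n * Real.cos ((n:ℝ)*ψ)| ≤ N := by
        calc |∑ n ∈ Finset.Icc 1 N, r^n * Real.cos ((n:ℝ)*ψ)|
            ≤ ∑ n ∈ Finset.Icc 1 N, |r^n * Real.cos ((n:ℝ)*ψ)| :=
              Finset.abs_sum_le_sum_abs _ _
          _ ≤ ∑ _n ∈ Finset.Icc 1 N, (1:ℝ) := Finset.sum_le_sum hterm
          _ = N := by simp
      have : KN N ψ r = 1 + 2*∑ n ∈ Finset.Icc 1 N, r^n * Real.cos ((n:ℝ)*ψ) := rfl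
      rw [this]
      calc |1 + 2*∑ n ∈ Finset.Icc 1 N, r^n * Real.cos ((n:ℝ)*ψ)|
          ≤ |(1:ℝ)| + |2*∑ n ∈ Finset.Icc 1 N, r^n * Real.cos ((n:ℝ)*ψ)| := abs_add_le _ _
        _ ≤ 1 + 2*N := by
            rw [abs_mul, abs_one]
            have : |(2:ℝ)| = 2 := by norm_num
            rw [this]
            linarith
    have hM : ∀ t, |g t| ≤ max |a| |b| := by
      intro t
      rcases hab t with ⟨h1, h2⟩
      rw [abs_le]
      constructor
      · linarith [le_max_left |a| |b|, neg_abs_le a]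
      · linarith [le_max_right |a| |b|, le_abs_self b]
    -- integrability
    have hprod_int : IntervalIntegrable (fun θ' => KN N (θ - θ') r * g θ') volume 0 (2*π) := by
      rw [intervalIntegrable_iff]
      apply MeasureTheory.Integrable.mono' (g := fun _ => (1+2*(N:ℝ))*max |a| |b|)
      · exact integrableOn_const measure_Ioc_lt_top.ne
      · exact ((hKcont.measurable.mul hmeas)).aestronglyMeasurable
      · apply Filter.Eventually.of_forall
        intro t
        rw [Real.norm_eq_abs, abs_mul]
        exact mul_le_mul (hKb _) (hM t) (abs_nonneg _) (by positivity)
    have haint : IntervalIntegrable (fun θ' => a * KN N (θ - θ') r) volume 0 (2*π) :=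
      (continuous_const.mul hKcont).intervalIntegrable 0 (2*π)
    have hbint : IntervalIntegrable (fun θ' => b * KN N (θ - θ') r) volume 0 (2*π) :=
      (continuous_const.mul hKcont).intervalIntegrable 0 (2*π)
    -- comparison
    have hlow : a * (2*π) ≤ ∫ θ' in (0:ℝ)..(2*π), KN N (θ - θ') r * g θ' := by
      have := intervalIntegral.integral_mono_on (by positivity : (0:ℝ) ≤ 2*π) haint hprod_int
        (fun x _ => by
          rw [mul_comm a (KN N (θ - x) r)]
          exact mul_le_mul_of_nonneg_left (hab x).1 (hknn x))
      rwa [intervalIntegral.integral_const_mul, kn_mass] at this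
    have hhigh : (∫ θ' in (0:ℝ)..(2*π), KN N (θ - θ') r * g θ') ≤ b * (2*π) := by
      have := intervalIntegral.integral_mono_on (by positivity : (0:ℝ) ≤ 2*π) hprod_int hbint
        (fun x _ => by
          rw [mul_comm b (KN N (θ - x) r)]
          exact mul_le_mul_of_nonneg_left (hab x).2 (hknn x))
      rwa [intervalIntegral.integral_const_mul, kn_mass] at this
    constructor
    · rw [one_div, inv_mul_eq_div, le_div_iff₀ h2pi]
      exact hlow
    · rw [one_div, inv_mul_eq_div, div_le_iff₀ h2pi]
      exact hhigh
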